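/- Let γ be an automorphism of a von Neumann algebra A preserving a von Neumann subalgebra B, with canonical implementations u_A(γ) on L²(A) and u_B(γ) on L²(B). Then: (i) p ∘ u_A(γ) = u_B(γ) ∘ p on L²(A)⁺, where p : L²(A)⁺ → L²(B)⁺ is the restriction map on square roots of states; (ii) for any normal conditional expectation E : A → B, q_{γ·E} = u_A(γ) ∘ q_E ∘ u_B(γ)*, where γ·E = γ∘E∘γ⁻¹. -/

import Mathlib

/-!
Both identities reduce to the uniqueness of cone representatives: two vectors of the positive
cone of a standard form of `M` inducing the same vector state on `M` are equal. Indeed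
`u_B(γ)* p(u_A(γ) ξ)` and `p(ξ)` induce the same state on `B`, and `u_A(γ)* q_{γ·E}(ξ)` and
`q_E(u_B(γ)* ξ)` the same state on `A`; identity (ii) then extends from the cone to all of
`L²(B)`, the cone being self-dual and hence total.

For the uniqueness, write `ξ - η = ζ₁ - ζ₂` with `ζ₁ ⊥ ζ₂` in the cone (nearest-point
projection onto the closed self-dual cone). Positivity of `⟪ζ₂, z J z ζ₁⟫` for `z` in the
commutant forces `ζ₂ ⊥ M'ζ₁`, so the projection `e` onto `[M'ζ₁]` is an element of `M` with
`e ζ₁ = ζ₁` and `e ζ₂ = 0`; equality of the states at `e` and `1` then gives `ζ₁ = ζ₂ = 0`.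
-/

open scoped ComplexOrder

structure StandardForm {H : Type*} [NormedAddCommGroup H] [InnerProductSpace ℂ H]
    [CompleteSpace H] (M : VonNeumannAlgebra H) where
  J : H ≃ₗᵢ⋆[ℂ] H
  P : Set H
  J_involutive : ∀ ξ : H, J (J ξ) = ξ
  selfDual : ∀ ξ : H, ξ ∈ P ↔ ∀ η ∈ P, 0 ≤ (inner ℂ ξ η : ℂ)
  J_fix : ∀ ξ ∈ P, J ξ = ξ
  JMJ_commutant : ∀ x ∈ M, ∃ y ∈ M.commutant, ∀ ξ : H, J (x (J ξ)) = y ξ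
  commutant_JMJ : ∀ y ∈ M.commutant, ∃ x ∈ M, ∀ ξ : H, J (x (J ξ)) = y ξ
  cone_stable : ∀ x ∈ M, ∀ ξ ∈ P, x (J (x (J ξ))) ∈ P

open scoped InnerProductSpace
open ContinuousLinearMap

theorem Complex.eq_zero_of_forall_nonneg_sq_mul_add_mul {a b : ℂ}
    (h : ∀ t : ℝ, 0 ≤ (t : ℂ) ^ 2 * a + t * b) : b = 0 := by
  have hre : b.re = 0 := by
    have hdiscrim := discrim_le_zero (a := a.re) (b := b.re) (c := 0) fun t => by
      have ht := (Complex.nonneg_iff.1 (h t)).1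
      simp only [Complex.add_re, Complex.re_ofReal_mul, ← Complex.ofReal_pow] at ht
      linarith
    rw [discrim] at hdiscrim
    nlinarith [sq_nonneg b.re]
  have him : b.im = 0 := by
    have h₁ := (Complex.nonneg_iff.1 (h 1)).2
    have h₂ := (Complex.nonneg_iff.1 (h (-1))).2
    simp only [Complex.add_im, Complex.mul_im] at h₁ h₂
    norm_num at h₁ h₂
    linarith
  exact Complex.ext hre him

section

variable {H : Type*} [NormedAddCommGroup H] [InnerProductSpace ℂ H]

-- with `ComplexOrder`, `0 ≤ z` means that `z` is real and nonnegative
def IsSelfDual (P : Set H) : Prop := ∀ ξ : H, ξ ∈ P ↔ ∀ η ∈ P, 0 ≤ ⟪ξ, η⟫_ℂ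

namespace IsSelfDual

variable {P : Set H}

theorem inner_nonneg (hP : IsSelfDual P) {ξ η : H} (hξ : ξ ∈ P) (hη : η ∈ P) :
    0 ≤ ⟪ξ, η⟫_ℂ :=
  (hP ξ).1 hξ η hη

theorem re_inner_nonneg (hP : IsSelfDual P) {ξ η : H} (hξ : ξ ∈ P) (hη : η ∈ P) :
    0 ≤ (⟪ξ, η⟫_ℂ).re :=
  (Complex.nonneg_iff.1 (hP.inner_nonneg hξ hη)).1

theorem zero_mem (hP : IsSelfDual P) : (0 : H) ∈ P :=
  (hP 0).2 fun η _ => by simp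

theorem add_mem (hP : IsSelfDual P) {ξ η : H} (hξ : ξ ∈ P) (hη : η ∈ P) : ξ + η ∈ P :=
  (hP _).2 fun ζ hζ => by
    rw [inner_add_left]
    exact add_nonneg (hP.inner_nonneg hξ hζ) (hP.inner_nonneg hη hζ)

theorem isClosed (hP : IsSelfDual P) : IsClosed P := by
  have hPeq : P = ⋂ η ∈ P, {ξ : H | 0 ≤ ⟪ξ, η⟫_ℂ} := by
    ext ξ
    simpa only [Set.mem_iInter, Set.mem_ofPred_eq] using hP ξ
  rw [hPeq]
  exact isClosed_biInter fun η _ =>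
    isClosed_le continuous_const (continuous_id.inner continuous_const)

theorem convex (hP : IsSelfDual P) : Convex ℝ P := by
  intro ξ hξ η hη a b ha hb _
  refine (hP _).2 fun ζ hζ => ?_
  rw [← Complex.coe_smul, ← Complex.coe_smul, inner_add_left, inner_smul_left, inner_smul_left,
    Complex.conj_ofReal, Complex.conj_ofReal]
  exact add_nonneg (mul_nonneg (by exact_mod_cast ha) (hP.inner_nonneg hξ hζ))
    (mul_nonneg (by exact_mod_cast hb) (hP.inner_nonneg hη hζ))

theorem eq_zero_of_inner_eq_zero (hP : IsSelfDual P) {w : H} (hw : ∀ η ∈ P, ⟪w, η⟫_ℂ = 0) :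
    w = 0 :=
  inner_self_eq_zero.mp (hw w ((hP w).2 fun η hη => (hw η hη).ge))

theorem dense_span (hP : IsSelfDual P) [CompleteSpace H] :
    Dense (Submodule.span ℂ P : Set H) := by
  rw [Submodule.dense_iff_topologicalClosure_eq_top, Submodule.topologicalClosure_eq_top_iff,
    Submodule.eq_bot_iff]
  exact fun w hw => hP.eq_zero_of_inner_eq_zero fun η hη =>
    (Submodule.mem_orthogonal' _ w).1 hw η (Submodule.subset_span hη)

theorem adjoint_apply_mem (hP : IsSelfDual P) [CompleteSpace H] {u : H →L[ℂ] H}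
    (hu : ∀ ξ ∈ P, u ξ ∈ P) {ξ : H} (hξ : ξ ∈ P) : adjoint u ξ ∈ P :=
  (hP _).2 fun η hη => by
    rw [adjoint_inner_left]
    exact hP.inner_nonneg hξ (hu η hη)

theorem exists_sub_eq_sub_inner_eq_zero (hP : IsSelfDual P) [CompleteSpace H] {ξ η : H}
    (hξ : ξ ∈ P) (hη : η ∈ P) : ∃ ζ₁ ∈ P, ∃ ζ₂ ∈ P, ξ - η = ζ₁ - ζ₂ ∧ ⟪ζ₁, ζ₂⟫_ℂ = 0 := by
  let _ : InnerProductSpace ℝ H := InnerProductSpace.complexToReal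
  -- `ζ₁` is the nearest point of `P` to `ξ - η`
  obtain ⟨ζ₁, hζ₁, hmin⟩ := exists_norm_eq_iInf_of_complete_convex ⟨0, hP.zero_mem⟩
    hP.isClosed.isComplete hP.convex (ξ - η)
  rw [norm_eq_iInf_iff_real_inner_le_zero hP.convex hζ₁] at hmin
  set ζ₂ := ζ₁ - (ξ - η)
  have hvar : ∀ w ∈ P, (⟪ζ₂, ζ₁⟫_ℂ).re ≤ (⟪ζ₂, w⟫_ℂ).re := fun w hw => by
    have h := hmin w hw
    rw [real_inner_eq_re_inner, ← neg_sub ζ₁, inner_neg_left, inner_sub_right] at h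
    simpa using h
  have horth : (⟪ζ₂, ζ₁⟫_ℂ).re = 0 := by
    have h0 := hvar 0 hP.zero_mem
    have h2 := hvar (ζ₁ + ζ₁) (hP.add_mem hζ₁ hζ₁)
    rw [inner_add_right, Complex.add_re] at h2
    simp only [inner_zero_right, Complex.zero_re] at h0
    linarith
  have hζ₂ : ζ₂ ∈ P := (hP ζ₂).2 fun w hw => by
    refine Complex.nonneg_iff.2 ⟨horth ▸ hvar w hw, ?_⟩
    have him : ∀ ζ ∈ P, (⟪ζ, w⟫_ℂ).im = 0 := fun ζ hζ =>
      (Complex.nonneg_iff.1 (hP.inner_nonneg hζ hw)).2.symm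
    simp only [ζ₂, inner_sub_left, Complex.sub_im, him _ hζ₁, him _ hξ, him _ hη, sub_zero]
  refine ⟨ζ₁, hζ₁, ζ₂, hζ₂, (sub_sub_cancel ζ₁ _).symm, ?_⟩
  have hnonneg := hP.inner_nonneg hζ₁ hζ₂
  have hre : (⟪ζ₁, ζ₂⟫_ℂ).re = 0 := by rw [← inner_conj_symm, Complex.conj_re, horth]
  exact Complex.ext hre (Complex.nonneg_iff.1 hnonneg).2.symm

end IsSelfDual

section

variable [CompleteSpace H]

theorem IsSelfAdjoint.re_inner_add_apply_sub_eq_zero {x : H →L[ℂ] H} (hx : IsSelfAdjoint x)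
    {ξ η : H} (h : ⟪ξ, x ξ⟫_ℂ = ⟪η, x η⟫_ℂ) : (⟪ξ + η, x (ξ - η)⟫_ℂ).re = 0 := by
  have hsymm : ⟪ξ, x η⟫_ℂ = starRingEnd ℂ ⟪η, x ξ⟫_ℂ := by
    rw [inner_conj_symm]
    exact (hx.isSymmetric ξ η).symm
  rw [map_sub, inner_add_left, inner_sub_right, inner_sub_right, h, hsymm]
  simp only [Complex.add_re, Complex.sub_re, Complex.conj_re]
  ring

theorem ContinuousLinearMap.inner_adjoint_apply_apply_adjoint_apply (u b : H →L[ℂ] H) (ζ : H) :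
    ⟪adjoint u ζ, b (adjoint u ζ)⟫_ℂ = ⟪ζ, (u * b * adjoint u) ζ⟫_ℂ :=
  adjoint_inner_left u _ ζ

namespace VonNeumannAlgebra

def cyclicSubspace (N : VonNeumannAlgebra H) (ζ : H) : Submodule ℂ H :=
  (Submodule.span ℂ ((fun y : H →L[ℂ] H => y ζ) '' N)).topologicalClosure

variable (N : VonNeumannAlgebra H) (ζ : H)

instance : (N.cyclicSubspace ζ).HasOrthogonalProjection := by
  unfold cyclicSubspace
  infer_instance

theorem mem_cyclicSubspace_self : ζ ∈ N.cyclicSubspace ζ :=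
  Submodule.le_topologicalClosure _ (Submodule.subset_span ⟨1, one_mem N, rfl⟩)

theorem cyclicSubspace_mem_invtSubmodule {y : H →L[ℂ] H} (hy : y ∈ N) :
    N.cyclicSubspace ζ ∈ Module.End.invtSubmodule (y : H →ₗ[ℂ] H) := by
  refine Submodule.topologicalClosure_mem_invtSubmodule (f := y) ?_
  rw [Module.End.mem_invtSubmodule, Submodule.span_le]
  rintro _ ⟨y', hy', rfl⟩
  exact Submodule.subset_span ⟨y * y', mul_mem hy hy', rfl⟩

theorem mem_orthogonal_cyclicSubspace {η : H} (h : ∀ y ∈ N, ⟪η, y ζ⟫_ℂ = 0) :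
    η ∈ (N.cyclicSubspace ζ)ᗮ := by
  rw [cyclicSubspace, Submodule.orthogonal_closure, Submodule.mem_orthogonal']
  refine fun u hu => (Submodule.span_le (p := LinearMap.ker (innerₛₗ ℂ η))).2 ?_ hu
  rintro _ ⟨y, hy, rfl⟩
  exact h y hy

theorem starProjection_cyclicSubspace_mem_commutant :
    (N.cyclicSubspace ζ).starProjection ∈ N.commutant := by
  rw [IsStarProjection.mem_iff isStarProjection_starProjection, commutant_commutant,
    Submodule.range_starProjection]
  exact fun y hy => N.cyclicSubspace_mem_invtSubmodule ζ hy

end VonNeumannAlgebra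

namespace StandardForm

variable {M : VonNeumannAlgebra H} (sf : StandardForm M)

theorem isSelfDual : IsSelfDual sf.P := sf.selfDual

theorem commutant_apply_J_apply_mem {y : H →L[ℂ] H} (hy : y ∈ M.commutant) {ρ : H}
    (hρ : ρ ∈ sf.P) : y (sf.J (y ρ)) ∈ sf.P := by
  obtain ⟨x, hx, hxy⟩ := sf.commutant_JMJ y hy
  have hJy : sf.J (y ρ) = x ρ := by
    rw [← hxy, sf.J_fix ρ hρ, sf.J_involutive]
  have hmem : x (sf.J (x ρ)) ∈ sf.P := by
    simpa only [sf.J_fix ρ hρ] using sf.cone_stable x hx ρ hρ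
  rwa [hJy, ← hxy, sf.J_fix _ hmem]

theorem inner_apply_add_inner_J_apply_eq_zero {ζ₁ ζ₂ : H} (h₁ : ζ₁ ∈ sf.P) (h₂ : ζ₂ ∈ sf.P)
    (h₁₂ : ⟪ζ₂, ζ₁⟫_ℂ = 0) {y : H →L[ℂ] H} (hy : y ∈ M.commutant) :
    ⟪ζ₂, y ζ₁⟫_ℂ + ⟪ζ₂, sf.J (y ζ₁)⟫_ℂ = 0 := by
  -- `⟪ζ₂, z J z ζ₁⟫ ≥ 0` for `z = t • y + 1` is a quadratic in `t` with no constant term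
  refine Complex.eq_zero_of_forall_nonneg_sq_mul_add_mul (a := ⟪ζ₂, y (sf.J (y ζ₁))⟫_ℂ)
    fun t => ?_
  have hz : (t : ℂ) • y + 1 ∈ M.commutant :=
    add_mem (M.commutant.toStarSubalgebra.smul_mem hy _) (one_mem _)
  have hJ : sf.J (((t : ℂ) • y + 1) ζ₁) = (t : ℂ) • sf.J (y ζ₁) + ζ₁ := by
    rw [add_apply, smul_apply, one_apply_eq_self, map_add, LinearIsometryEquiv.map_smulₛₗ,
      Complex.conj_ofReal, sf.J_fix ζ₁ h₁]
  convert sf.isSelfDual.inner_nonneg h₂ (sf.commutant_apply_J_apply_mem hz h₁) using 1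
  rw [hJ]
  simp only [add_apply, smul_apply, one_apply_eq_self, map_add, map_smul, inner_add_right,
    inner_smul_right, h₁₂]
  ring

theorem inner_commutant_apply_eq_zero {ζ₁ ζ₂ : H} (h₁ : ζ₁ ∈ sf.P) (h₂ : ζ₂ ∈ sf.P)
    (h₁₂ : ⟪ζ₂, ζ₁⟫_ℂ = 0) {y : H →L[ℂ] H} (hy : y ∈ M.commutant) : ⟪ζ₂, y ζ₁⟫_ℂ = 0 := by
  have h := sf.inner_apply_add_inner_J_apply_eq_zero h₁ h₂ h₁₂ hy
  -- `J` is antilinear, so replacing `y` by `I • y` flips the sign of the second term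
  have hI := sf.inner_apply_add_inner_J_apply_eq_zero h₁ h₂ h₁₂
    (M.commutant.toStarSubalgebra.smul_mem hy Complex.I)
  simp only [smul_apply, LinearIsometryEquiv.map_smulₛₗ, Complex.conj_I, inner_smul_right] at hI
  linear_combination (h - Complex.I * hI) / 2 +
    (⟪ζ₂, y ζ₁⟫_ℂ - ⟪ζ₂, sf.J (y ζ₁)⟫_ℂ) / 2 * Complex.I_sq

theorem eq_of_inner_apply_eq {ξ η : H} (hξ : ξ ∈ sf.P) (hη : η ∈ sf.P)
    (h : ∀ x ∈ M, ⟪ξ, x ξ⟫_ℂ = ⟪η, x η⟫_ℂ) : ξ = η := by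
  obtain ⟨ζ₁, h₁, ζ₂, h₂, hsub, h₁₂⟩ := sf.isSelfDual.exists_sub_eq_sub_inner_eq_zero hξ hη
  set e := (M.commutant.cyclicSubspace ζ₁).starProjection
  have he : e ∈ M := by
    simpa only [VonNeumannAlgebra.commutant_commutant] using
      M.commutant.starProjection_cyclicSubspace_mem_commutant ζ₁
  have he₁ : e ζ₁ = ζ₁ :=
    Submodule.starProjection_eq_self_iff.2 (M.commutant.mem_cyclicSubspace_self ζ₁)
  have he₂ : e ζ₂ = 0 := by
    refine (Submodule.starProjection_apply_eq_zero_iff _).2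
      (M.commutant.mem_orthogonal_cyclicSubspace ζ₁ fun y hy => ?_)
    exact sf.inner_commutant_apply_eq_zero h₁ h₂ (by rw [← inner_conj_symm, h₁₂, map_zero]) hy
  have hs₁ := (isSelfAdjoint_starProjection _).re_inner_add_apply_sub_eq_zero (h e he)
  have hs := (IsSelfAdjoint.one _).re_inner_add_apply_sub_eq_zero (h 1 (one_mem M))
  rw [hsub, map_sub, he₁, he₂, sub_zero] at hs₁
  rw [one_apply_eq_self, hsub] at hs
  have hre₁₂ : (⟪ζ₁, ζ₂⟫_ℂ).re = 0 := by rw [h₁₂, Complex.zero_re]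
  have hre₂₁ : (⟪ζ₂, ζ₁⟫_ℂ).re = 0 := by rw [← inner_conj_symm, Complex.conj_re, hre₁₂]
  have hξζ₂ := sf.isSelfDual.re_inner_nonneg hξ h₂
  obtain rfl : ξ = ζ₁ - ζ₂ + η := sub_eq_iff_eq_add.1 hsub
  simp only [inner_add_left, inner_sub_left, inner_sub_right, Complex.add_re,
    Complex.sub_re] at hs₁ hs hξζ₂
  have hζ₁ : (⟪ζ₁, ζ₁⟫_ℂ).re ≤ 0 := by linarith [sf.isSelfDual.re_inner_nonneg hη h₁]
  have hζ₂ : (⟪ζ₂, ζ₂⟫_ℂ).re ≤ 0 := by linarith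
  rw [re_inner_self_nonpos (𝕜 := ℂ) |>.1 hζ₁, re_inner_self_nonpos (𝕜 := ℂ) |>.1 hζ₂, sub_zero,
    zero_add]

end StandardForm

end

end

theorem canonical_implementation_compat_general
    {HA HB : Type*}
    [NormedAddCommGroup HA] [InnerProductSpace ℂ HA] [CompleteSpace HA]
    [NormedAddCommGroup HB] [InnerProductSpace ℂ HB] [CompleteSpace HB]
    (A : VonNeumannAlgebra HA) (B : VonNeumannAlgebra HA)
    (sfA : StandardForm A)
    (B' : VonNeumannAlgebra HB) (sfB : StandardForm B')
    -- Φ is a normal *-isomorphism of B onto B', identifying the standard form of B on HB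
    (Φ : (HA →L[ℂ] HA) → (HB →L[ℂ] HB))
    (hΦ_surj : ∀ y : HB →L[ℂ] HB, y ∈ B' → ∃ b ∈ B, Φ b = y)
    -- p : L²(A)⁺ → L²(B)⁺, the restriction map on square roots of positive normal forms
    (p : HA → HB)
    (hp_mem : ∀ ξ ∈ sfA.P, p ξ ∈ sfB.P)
    (hp_def : ∀ ξ ∈ sfA.P, ∀ b ∈ B, (inner ℂ ξ (b ξ) : ℂ) = inner ℂ (p ξ) (Φ b (p ξ)))
    -- uA = u_A(γ) : the canonical implementation of γ on L²(A), with inverse uAi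
    (uA uAi : HA →L[ℂ] HA)
    (huA1 : uA * uAi = 1) (huA2 : uAi * uA = 1)
    (huAad : ContinuousLinearMap.adjoint uA = uAi)
    (huAP : ∀ ξ ∈ sfA.P, uA ξ ∈ sfA.P)
    (hγA : ∀ a ∈ A, uA * a * uAi ∈ A)
    (hγB : ∀ b ∈ B, uA * b * uAi ∈ B)
    -- uB = u_B(γ) : the canonical implementation of γ|_B on L²(B), with inverse uBi
    (uB uBi : HB →L[ℂ] HB)
    (huB1 : uB * uBi = 1)
    (huBad : ContinuousLinearMap.adjoint uB = uBi)
    (huBP : ∀ ξ ∈ sfB.P, uB ξ ∈ sfB.P)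
    -- uB implements on L²(B) the restriction of γ to B
    (hcompat : ∀ b ∈ B, Φ (uA * b * uAi) = uB * Φ b * uBi) :
    -- (i) p ∘ u_A(γ) = u_B(γ) ∘ p on L²(A)⁺
    (∀ ξ ∈ sfA.P, p (uA ξ) = uB (p ξ)) ∧
    -- (ii) for any normal conditional expectation E, q_{γ·E} = u_A(γ) ∘ q_E ∘ u_B(γ)*
    (∀ (E : (HA →L[ℂ] HA) →ₗ[ℂ] (HA →L[ℂ] HA)),
      (∀ a ∈ A, E a ∈ B) → (∀ b ∈ B, E b = b) →
      (∀ a : HA →L[ℂ] HA, a.IsPositive → (E a).IsPositive) →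
      (∀ a : HA →L[ℂ] HA, ‖E a‖ ≤ ‖a‖) →
      (∀ b₁ ∈ B, ∀ b₂ ∈ B, ∀ a ∈ A, E (b₁ * a * b₂) = b₁ * E a * b₂) →
      ∀ (q q' : HB →L[ℂ] HA),
        -- q = q_E, the canonical positive isometry associated with E
        (∀ ξ ∈ sfB.P, q ξ ∈ sfA.P) → (∀ ξ : HB, ‖q ξ‖ = ‖ξ‖) →
        (∀ a ∈ A, ∀ ξ η : HB, (inner ℂ ξ (Φ (E a) η) : ℂ) = inner ℂ (q ξ) (a (q η))) →
        -- q' = q_{γ·E}, the canonical positive isometry associated with γ·E = γ∘E∘γ⁻¹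
        (∀ ξ ∈ sfB.P, q' ξ ∈ sfA.P) → (∀ ξ : HB, ‖q' ξ‖ = ‖ξ‖) →
        (∀ a ∈ A, ∀ ξ η : HB,
          (inner ℂ ξ (Φ (uA * E (uAi * a * uA) * uAi) η) : ℂ) = inner ℂ (q' ξ) (a (q' η))) →
        q' = (uA.comp q).comp uBi) := by
  subst huAad huBad
  have huA_left : ∀ v, adjoint uA (uA v) = v := fun v => by
    rw [← mul_apply_eq_comp, huA2, one_apply_eq_self]
  have huA_right : ∀ v, uA (adjoint uA v) = v := fun v => by
    rw [← mul_apply_eq_comp, huA1, one_apply_eq_self]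
  have huB_right : ∀ v, uB (adjoint uB v) = v := fun v => by
    rw [← mul_apply_eq_comp, huB1, one_apply_eq_self]
  refine ⟨fun ξ hξ => ?_, fun E hEB _ _ _ _ q q' hqP _ hq hq'P _ hq' => ?_⟩
  · have hp : adjoint uB (p (uA ξ)) = p ξ := by
      refine sfB.eq_of_inner_apply_eq
        (sfB.isSelfDual.adjoint_apply_mem huBP (hp_mem _ (huAP ξ hξ))) (hp_mem ξ hξ) ?_
      intro z hz
      obtain ⟨b, hb, rfl⟩ := hΦ_surj z hz
      rw [inner_adjoint_apply_apply_adjoint_apply, ← hcompat b hb,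
        ← hp_def _ (huAP ξ hξ) _ (hγB b hb), ← hp_def ξ hξ b hb, mul_apply_eq_comp,
        mul_apply_eq_comp, huA_left, ← adjoint_inner_left, huA_left]
    rw [← hp, huB_right]
  · refine ContinuousLinearMap.ext_on sfB.isSelfDual.dense_span fun ξ hξ => ?_
    have hq'ξ : adjoint uA (q' ξ) = q (adjoint uB ξ) := by
      refine sfA.eq_of_inner_apply_eq (sfA.isSelfDual.adjoint_apply_mem huAP (hq'P ξ hξ))
        (hqP _ (sfB.isSelfDual.adjoint_apply_mem huBP hξ)) fun a ha => ?_
      have hconj : adjoint uA * (uA * a * adjoint uA) * uA = a := by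
        simp only [mul_assoc, huA2, mul_one]
        rw [← mul_assoc, huA2, one_mul]
      rw [inner_adjoint_apply_apply_adjoint_apply, ← hq' _ (hγA a ha), hconj,
        hcompat _ (hEB a ha), ← inner_adjoint_apply_apply_adjoint_apply, hq a ha]
    rw [comp_apply, comp_apply, ← hq'ξ, huA_right]

/-- Let `γ` be an automorphism of `A` preserving `B`, with canonical unitary
implementations `u_A(γ)` on `L²(A)` and `u_B(γ)` on `L²(B)` (cone-preserving, `J`-commuting
unitaries implementing `γ`). Then (i) `p ∘ u_A(γ) = u_B(γ) ∘ p` on `L²(A)⁺`, and (ii) for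
every normal conditional expectation `E : A → B` one has
`q_{γ·E} = u_A(γ) ∘ q_E ∘ u_B(γ)*`, where `γ·E = γ ∘ E ∘ γ⁻¹`. -/
theorem canonical_implementation_compat
    {HA HB : Type*}
    [NormedAddCommGroup HA] [InnerProductSpace ℂ HA] [CompleteSpace HA]
    [NormedAddCommGroup HB] [InnerProductSpace ℂ HB] [CompleteSpace HB]
    (A : VonNeumannAlgebra HA) (B : VonNeumannAlgebra HA)
    (hBA : ∀ x : HA →L[ℂ] HA, x ∈ B → x ∈ A)
    (sfA : StandardForm A)
    (B' : VonNeumannAlgebra HB) (sfB : StandardForm B')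
    -- Φ is a normal *-isomorphism of B onto B', identifying the standard form of B on HB
    (Φ : (HA →L[ℂ] HA) → (HB →L[ℂ] HB))
    (hΦ_one : Φ 1 = 1)
    (hΦ_add : ∀ b₁ ∈ B, ∀ b₂ ∈ B, Φ (b₁ + b₂) = Φ b₁ + Φ b₂)
    (hΦ_smul : ∀ c : ℂ, ∀ b ∈ B, Φ (c • b) = c • Φ b)
    (hΦ_mul : ∀ b₁ ∈ B, ∀ b₂ ∈ B, Φ (b₁ * b₂) = Φ b₁ * Φ b₂)
    (hΦ_star : ∀ b ∈ B, Φ (star b) = star (Φ b))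
    (hΦ_mem : ∀ b ∈ B, Φ b ∈ B')
    (hΦ_surj : ∀ y : HB →L[ℂ] HB, y ∈ B' → ∃ b ∈ B, Φ b = y)
    (hΦ_inj : ∀ b₁ ∈ B, ∀ b₂ ∈ B, Φ b₁ = Φ b₂ → b₁ = b₂)
    -- p : L²(A)⁺ → L²(B)⁺, the restriction map on square roots of positive normal forms
    (p : HA → HB)
    (hp_mem : ∀ ξ ∈ sfA.P, p ξ ∈ sfB.P)
    (hp_def : ∀ ξ ∈ sfA.P, ∀ b ∈ B, (inner ℂ ξ (b ξ) : ℂ) = inner ℂ (p ξ) (Φ b (p ξ)))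
    -- uA = u_A(γ) : the canonical implementation of γ on L²(A), with inverse uAi
    (uA uAi : HA →L[ℂ] HA)
    (huA1 : uA * uAi = 1) (huA2 : uAi * uA = 1)
    (huAad : ContinuousLinearMap.adjoint uA = uAi)
    (huAP : ∀ ξ ∈ sfA.P, uA ξ ∈ sfA.P)
    (huAJ : ∀ ξ : HA, uA (sfA.J ξ) = sfA.J (uA ξ))
    (hγA : ∀ a ∈ A, uA * a * uAi ∈ A)
    (hγB : ∀ b ∈ B, uA * b * uAi ∈ B)
    -- uB = u_B(γ) : the canonical implementation of γ|_B on L²(B), with inverse uBi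
    (uB uBi : HB →L[ℂ] HB)
    (huB1 : uB * uBi = 1) (huB2 : uBi * uB = 1)
    (huBad : ContinuousLinearMap.adjoint uB = uBi)
    (huBP : ∀ ξ ∈ sfB.P, uB ξ ∈ sfB.P)
    (huBJ : ∀ ξ : HB, uB (sfB.J ξ) = sfB.J (uB ξ))
    -- uB implements on L²(B) the restriction of γ to B
    (hcompat : ∀ b ∈ B, Φ (uA * b * uAi) = uB * Φ b * uBi) :
    -- (i) p ∘ u_A(γ) = u_B(γ) ∘ p on L²(A)⁺
    (∀ ξ ∈ sfA.P, p (uA ξ) = uB (p ξ)) ∧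
    -- (ii) for any normal conditional expectation E, q_{γ·E} = u_A(γ) ∘ q_E ∘ u_B(γ)*
    (∀ (E : (HA →L[ℂ] HA) →ₗ[ℂ] (HA →L[ℂ] HA)),
      (∀ a ∈ A, E a ∈ B) → (∀ b ∈ B, E b = b) →
      (∀ a : HA →L[ℂ] HA, a.IsPositive → (E a).IsPositive) →
      (∀ a : HA →L[ℂ] HA, ‖E a‖ ≤ ‖a‖) →
      (∀ b₁ ∈ B, ∀ b₂ ∈ B, ∀ a ∈ A, E (b₁ * a * b₂) = b₁ * E a * b₂) →
      ∀ (q q' : HB →L[ℂ] HA),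
        -- q = q_E, the canonical positive isometry associated with E
        (∀ ξ ∈ sfB.P, q ξ ∈ sfA.P) → (∀ ξ : HB, ‖q ξ‖ = ‖ξ‖) →
        (∀ a ∈ A, ∀ ξ η : HB, (inner ℂ ξ (Φ (E a) η) : ℂ) = inner ℂ (q ξ) (a (q η))) →
        -- q' = q_{γ·E}, the canonical positive isometry associated with γ·E = γ∘E∘γ⁻¹
        (∀ ξ ∈ sfB.P, q' ξ ∈ sfA.P) → (∀ ξ : HB, ‖q' ξ‖ = ‖ξ‖) →
        (∀ a ∈ A, ∀ ξ η : HB,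
          (inner ℂ ξ (Φ (uA * E (uAi * a * uA) * uAi) η) : ℂ) = inner ℂ (q' ξ) (a (q' η))) →
        q' = (uA.comp q).comp uBi) :=
  canonical_implementation_compat_general A B sfA B' sfB Φ hΦ_surj p hp_mem hp_def uA uAi huA1 huA2
    huAad huAP hγA hγB uB uBi huB1 huBad huBP hcompat
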